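/- Let L be the Laplacian of a connected undirected graph on N vertices and c ∈ R^N with L c ≠ 0. Then ‖L sign(L c)‖_∞ ≥ 1, where sign is applied componentwise. -/

import Mathlib

/-!
Since `1ᵀ L = 0`, the entries of `y = L c` sum to zero, so `y ≠ 0` has a negative and a positive
entry. Hence `sign y` is not constant, and as the kernel of the Laplacian of a connected graph
consists of the constant vectors, `L (sign y) ≠ 0`. But `L` and `sign y` are integral, so a
nonzero entry of `L (sign y)` has absolute value at least `1`.
-/

open Matrix

theorem exists_neg_and_pos_of_sum_eq_zero {ι M : Type*} [Fintype ι] [AddCommGroup M]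
    [LinearOrder M] [IsOrderedAddMonoid M] {y : ι → M} (hsum : ∑ i, y i = 0) (hy : y ≠ 0) :
    (∃ i, y i < 0) ∧ ∃ j, 0 < y j := by
  obtain ⟨k, hk⟩ := Function.ne_iff.mp hy
  constructor
  · obtain ⟨i, -, hi⟩ := Finset.exists_pos_of_sum_zero_of_exists_nonzero (s := Finset.univ)
      (-y) (by simp [hsum]) ⟨k, Finset.mem_univ k, by simpa using hk⟩
    exact ⟨i, by simpa using hi⟩
  · obtain ⟨j, -, hj⟩ := Finset.exists_pos_of_sum_zero_of_exists_nonzero (s := Finset.univ)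
      y hsum ⟨k, Finset.mem_univ k, hk⟩
    exact ⟨j, hj⟩

theorem Real.sign_eq_intCast_sign (r : ℝ) : Real.sign r = ((SignType.sign r : ℤ) : ℝ) := by
  rcases lt_trichotomy r 0 with h | rfl | h
  · simp [Real.sign_of_neg h, h]
  · simp
  · simp [Real.sign_of_pos h, h]

namespace SimpleGraph

variable {V : Type*} [Fintype V] [DecidableEq V] (G : SimpleGraph V) [DecidableRel G.Adj]

theorem sum_lapMatrix_mulVec {R : Type*} [CommRing R] (x : V → R) :
    ∑ i, (G.lapMatrix R *ᵥ x) i = 0 := by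
  have hconst : G.lapMatrix R *ᵥ 1 = 0 := G.lapMatrix_mulVec_const_eq_zero
  rw [← one_dotProduct, dotProduct_mulVec, ← mulVec_transpose, (G.isSymm_lapMatrix (R := R)).eq,
    hconst, zero_dotProduct]

theorem lapMatrix_mulVec_intCast {R : Type*} [Ring R] (t : V → ℤ) :
    G.lapMatrix R *ᵥ (fun j => (t j : R)) = fun i => ((G.lapMatrix ℤ *ᵥ t) i : R) := by
  ext i
  simp only [lapMatrix_mulVec_apply]
  push_cast
  rfl

theorem lapMatrix_mulVec_ne_zero_of_ne (hG : G.Preconnected) {x : V → ℝ} {i j : V}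
    (hij : x i ≠ x j) : G.lapMatrix ℝ *ᵥ x ≠ 0 :=
  fun h => hij (G.lapMatrix_mulVec_eq_zero_iff_forall_reachable.mp h i j (hG i j))

end SimpleGraph

/-- If `L` is the Laplacian of a connected graph and `L c ≠ 0`, then
`‖L sign(L c)‖_∞ ≥ 1`. -/
theorem laplacian_sign_lower_bound (N : ℕ) (G : SimpleGraph (Fin N))
    [DecidableRel G.Adj] (hG : G.Connected) (c : Fin N → ℝ)
    (hc : (G.lapMatrix ℝ) *ᵥ c ≠ 0) :
    ∃ i, 1 ≤ |((G.lapMatrix ℝ) *ᵥ (fun j => Real.sign (((G.lapMatrix ℝ) *ᵥ c) j))) i| := by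
  obtain ⟨⟨i, hi⟩, j, hj⟩ := exists_neg_and_pos_of_sum_eq_zero (G.sum_lapMatrix_mulVec c) hc
  have hne := G.lapMatrix_mulVec_ne_zero_of_ne hG.preconnected
    (x := fun k => Real.sign ((G.lapMatrix ℝ *ᵥ c) k)) (i := i) (j := j)
    (by norm_num [Real.sign_of_neg hi, Real.sign_of_pos hj])
  simp only [Real.sign_eq_intCast_sign, G.lapMatrix_mulVec_intCast] at hne ⊢
  obtain ⟨k, hk⟩ := Function.ne_iff.mp hne
  exact ⟨k, by exact_mod_cast Int.one_le_abs (by simpa using hk)⟩
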